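/- Two invertible fractional ideals with the same coefficient ring R are weakly equivalent, while an invertible ideal and a non-invertible ideal with the same coefficient ring R are never weakly equivalent. -/

import Mathlib

/-- The colon (quotient) of two `ℤ`-submodules of a field `K`:
`(J : I) = {x ∈ K : x I ⊆ J}`. -/
def colonSub {K : Type*} [Field K] (J I : Submodule ℤ K) : Submodule ℤ K where
  carrier := {x : K | ∀ y ∈ I, x * y ∈ J}
  add_mem' := by
    intro a b ha hb y hy
    have := J.add_mem (ha y hy) (hb y hy)
    simpa [add_mul] using this
  zero_mem' := by intro y hy; simp
  smul_mem' := by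
    intro c x hx y hy
    rw [smul_mul_assoc]
    exact J.smul_mem c (hx y hy)

/-- An order in a number field `K`: a subring of `K` which is a finitely generated
`ℤ`-module of full rank (it spans `K` over `ℚ`). -/
structure IsOrder {K : Type*} [Field K] [Algebra ℚ K] (R : Submodule ℤ K) : Prop where
  one_mem : (1 : K) ∈ R
  mul_le : R * R ≤ R
  fg : R.FG
  spans : Submodule.span ℚ (R : Set K) = ⊤

/-- A fractional `ℤ[β]`-ideal: a nonzero finitely generated `ℤ`-submodule of `K`
stable under multiplication by `ℤ[β]`. -/
def IsZBetaIdeal {K : Type*} [Field K] (β : K) (I : Submodule ℤ K) : Prop :=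
  I ≠ ⊥ ∧ I.FG ∧ Submodule.span ℤ (Set.range fun i : ℕ => β ^ i) * I ≤ I

/-- Two fractional ideals `I` and `J` are weakly equivalent if there exist fractional
ideals `X`, `Y` and an order `R` such that `IX = J`, `JY = I` and `XY = R`. -/
def WeakEquiv {K : Type*} [Field K] [Algebra ℚ K] (I J : Submodule ℤ K) : Prop :=
  ∃ X Y R : Submodule ℤ K, IsOrder R ∧ I * X = J ∧ J * Y = I ∧ X * Y = R

lemma mul_eq_self_of_colonSub_self_eq {K : Type*} [Field K] {R J : Submodule ℤ K}
    (hR : (1 : K) ∈ R) (hJJ : colonSub J J = R) : R * J = J := by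
  refine le_antisymm (Submodule.mul_le.mpr fun r hr y hy => ?_) fun y hy => ?_
  · rw [← hJJ] at hr
    exact hr y hy
  · simpa using Submodule.mul_mem_mul hR hy

lemma IsOrder.mul_self {K : Type*} [Field K] [Algebra ℚ K] {R : Submodule ℤ K}
    (hR : IsOrder R) : R * R = R :=
  le_antisymm hR.mul_le fun y hy => by simpa using Submodule.mul_mem_mul hR.one_mem hy

lemma mul_colonSub_eq_of_mul_eq {K : Type*} [Field K] {R J Z : Submodule ℤ K}
    (h : J * Z = R) : J * colonSub R J = R := by
  have hZ : Z ≤ colonSub R J := fun z hz w hw => by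
    rw [mul_comm, ← h]
    exact Submodule.mul_mem_mul hw hz
  refine le_antisymm (Submodule.mul_le.mpr fun y hy z hz => ?_) ?_
  · rw [mul_comm]
    exact hz y hy
  · calc R = J * Z := h.symm
      _ ≤ J * colonSub R J := mul_le_mul_right hZ J

lemma weakEquiv_of_mul_colonSub_eq {K : Type*} [Field K] [Algebra ℚ K]
    {R I J : Submodule ℤ K} (hR : IsOrder R)
    (hII : colonSub I I = R) (hJJ : colonSub J J = R)
    (hI : I * colonSub R I = R) (hJ : J * colonSub R J = R) : WeakEquiv I J := by
  refine ⟨colonSub R I * J, colonSub R J * I, R, hR, ?_, ?_, ?_⟩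
  · rw [← mul_assoc, hI, mul_eq_self_of_colonSub_self_eq hR.one_mem hJJ]
  · rw [← mul_assoc, hJ, mul_eq_self_of_colonSub_self_eq hR.one_mem hII]
  · calc colonSub R I * J * (colonSub R J * I)
        = (I * colonSub R I) * (J * colonSub R J) := by ring
      _ = R := by rw [hI, hJ, hR.mul_self]

lemma WeakEquiv.mul_colonSub_eq {K : Type*} [Field K] [Algebra ℚ K]
    {R I J : Submodule ℤ K} (hIJ : WeakEquiv I J) (hI : I * colonSub R I = R) :
    J * colonSub R J = R := by
  obtain ⟨_, Y, _, _, _, hJY, _⟩ := hIJ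
  exact mul_colonSub_eq_of_mul_eq (Z := Y * colonSub R I) (by rw [← mul_assoc, hJY, hI])

theorem stmt7_general {K : Type*} [Field K] [NumberField K]
    (R : Submodule ℤ K) (hR : IsOrder R)
    (I J : Submodule ℤ K)
    (hII : colonSub I I = R)
    (hJJ : colonSub J J = R) :
    ((I * colonSub R I = R ∧ J * colonSub R J = R) → WeakEquiv I J) ∧
    ((I * colonSub R I = R ∧ ¬ (J * colonSub R J = R)) → ¬ WeakEquiv I J) :=
  ⟨fun ⟨hI, hJ⟩ => weakEquiv_of_mul_colonSub_eq hR hII hJJ hI hJ,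
    fun ⟨hI, hJ⟩ hIJ => hJ (hIJ.mul_colonSub_eq hI)⟩

/-- Two invertible fractional ideals with the same coefficient ring `R` are weakly
equivalent, while an invertible ideal and a non-invertible ideal with the same coefficient
ring `R` are never weakly equivalent. Here an ideal `X` with coefficient ring `R` is
invertible if `X (R : X) = R`. -/
theorem stmt7 {K : Type*} [Field K] [NumberField K]
    (R : Submodule ℤ K) (hR : IsOrder R)
    (I J : Submodule ℤ K)
    (hI0 : I ≠ ⊥) (hIfg : I.FG) (hII : colonSub I I = R)
    (hJ0 : J ≠ ⊥) (hJfg : J.FG) (hJJ : colonSub J J = R) :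
    ((I * colonSub R I = R ∧ J * colonSub R J = R) → WeakEquiv I J) ∧
    ((I * colonSub R I = R ∧ ¬ (J * colonSub R J = R)) → ¬ WeakEquiv I J) :=
  stmt7_general R hR I J hII hJJ
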